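/- arXiv:2504.01927 — 2 statements merged into one kernel-verified Lean document; each statement's English description precedes it below -/
import Mathlib

section
/- Fix c > 0 and a positive integer δ. A cdf F with supp(F) = ℤ₊ solves problem P_{c,δ} if and only if y = 1 − F (restricted to ℤ₊) is a positive solution of the discrete initial value problem Δy(i) + c·y(i−δ) = 0 for i ≥ δ, y(i) = φ(i) for i = 0,…,δ, whose initial function φ = (1−F)|_{{0,…,δ}} belongs to Φ_d. In particular, there exists F ∈ P_{c,δ} with supp(F) = ℤ₊ if and only if cδ ≤ (δ/(δ+1))^{δ+1}. -/
open MeasureTheory Set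

/-- The class `Φ_d` of discrete initial functions: strictly decreasing on `{0, …, δ}`
with values in `(0, 1)`. -/
def MemPhid (δ : ℕ) (φ : ℕ → ℝ) : Prop :=
  (∀ i ≤ δ, 0 < φ i ∧ φ i < 1) ∧ ∀ i j : ℕ, i < j → j ≤ δ → φ j < φ i

/-- `y` is a solution of the discrete initial value problem
`Δy(i) + c y(i - δ) = 0` for `i ≥ δ`, with `y = φ` on `{0, …, δ}`. -/
def IsDSol (c : ℝ) (δ : ℕ) (φ y : ℕ → ℝ) : Prop :=
  (∀ i ≤ δ, y i = φ i) ∧ ∀ i : ℕ, δ ≤ i → (y (i + 1) - y i) + c * y (i - δ) = 0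

/-- Survival function evaluated at nonnegative integers. -/
noncomputable def survGn (μ : Measure ℝ) (i : ℕ) : ℝ := (μ (Set.Ioi (i : ℝ))).toReal

/-- The support of the distribution: points every neighbourhood of which has positive mass. -/
def suppF (μ : Measure ℝ) : Set ℝ :=
  {x | ∀ ε > 0, 0 < μ (Set.Ioo (x - ε) (x + ε))}


open Filter
open scoped ENNReal NNReal


-- elementary inequality: (n+1) t^n ≤ n t^(n+1) + 1 for t ≥ 0
lemma core_ineq (n : ℕ) : ∀ t : ℝ, 0 ≤ t → ((n:ℝ)+1) * t^n ≤ (n:ℝ) * t^(n+1) + 1 := by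
  induction n with
  | zero => intro t ht; simp
  | succ n ih =>
    intro t ht
    have h1 := ih t ht
    have h2 : (0:ℝ) ≤ (t-1) * (t^(n+1) - 1) := by
      rcases le_total t 1 with h | h
      · have : t^(n+1) ≤ 1 := pow_le_one₀ ht h
        nlinarith
      · have : 1 ≤ t^(n+1) := one_le_pow₀ h
        nlinarith
    have h3 : t * (((n:ℝ)+1) * t^n) ≤ t * ((n:ℝ) * t^(n+1) + 1) :=
      mul_le_mul_of_nonneg_left h1 ht
    have e1 : t^(n+1) = t^n * t := pow_succ t n
    have e2 : t^(n+2) = t^(n+1) * t := pow_succ t (n+1)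
    push_cast
    nlinarith [pow_nonneg ht n, pow_nonneg ht (n+1), h2, h3, e1, e2]

-- AM-GM style bound: δ * x^δ * (1-x) ≤ (δ/(δ+1))^(δ+1) for x ∈ [0,1]
lemma amgm_bound (δ : ℕ) (hδ : 0 < δ) (x : ℝ) (hx0 : 0 ≤ x) (hx1 : x ≤ 1) :
    (δ:ℝ) * (x^δ * (1-x)) ≤ ((δ:ℝ)/(δ+1))^(δ+1) := by
  have hδR : (0:ℝ) < δ := by exact_mod_cast hδ
  have hδ1 : (0:ℝ) < (δ:ℝ)+1 := by linarith
  set t : ℝ := (↑δ+1) * x / δ with ht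
  have ht0 : 0 ≤ t := by positivity
  have key := core_ineq δ t ht0
  have hxt : x = (δ:ℝ)/(δ+1) * t := by rw [ht]; field_simp
  have hpow : x^δ = ((δ:ℝ)/(δ+1))^δ * t^δ := by rw [hxt, mul_pow]
  have hq : (0:ℝ) < ((δ:ℝ)/(δ+1))^(δ+1) := by positivity
  have expand : (δ:ℝ) * (x^δ * (1-x)) = ((δ:ℝ)/(δ+1))^(δ+1) * (((δ:ℝ)+1) * t^δ - (δ:ℝ) * t^(δ+1)) := by
    rw [hpow, hxt, pow_succ]
    have : (δ:ℝ) * t^(δ+1) = (δ:ℝ) * (t^δ * t) := by ring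
    field_simp
    ring
  rw [expand]
  nlinarith [hq]

-- positive solution forces c*δ ≤ (δ/(δ+1))^(δ+1)
lemma key_osc (c : ℝ) (hc : 0 < c) (δ : ℕ) (hδ : 0 < δ) (G : ℕ → ℝ)
    (hpos : ∀ i, 0 < G i)
    (hrec : ∀ i, δ ≤ i → (G (i+1) - G i) + c * G (i - δ) = 0) :
    c * δ ≤ ((δ:ℝ)/(δ+1))^(δ+1) := by
  by_contra hcon
  push_neg at hcon
  obtain ⟨M, hM⟩ : ∃ M : ℝ, M = ((δ:ℝ)/(δ+1))^(δ+1) := ⟨_, rfl⟩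
  rw [← hM] at hcon
  have hδR : (0:ℝ) < δ := by exact_mod_cast hδ
  obtain ⟨ε, hε⟩ : ∃ ε : ℝ, ε = c - M / δ := ⟨_, rfl⟩
  have hεpos : 0 < ε := by
    have : M / δ < c := by rw [div_lt_iff₀ hδR]; linarith
    linarith
  -- the ratio sequence
  obtain ⟨r, hr⟩ : ∃ r : ℕ → ℝ, r = fun i => G (i+1) / G i := ⟨_, rfl⟩
  have hrpos : ∀ i, 0 < r i := fun i => by rw [hr]; exact div_pos (hpos _) (hpos _)
  have hrlt : ∀ i, δ ≤ i → r i < 1 := by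
    intro i hi
    have h := hrec i hi
    have : G (i+1) < G i := by nlinarith [hpos (i - δ)]
    rw [hr]
    exact (div_lt_one (hpos i)).2 this
  -- quotient identity : G i = G (i-δ) * ∏_{k<δ} r (i-δ+k), for δ ≤ i
  have hprod : ∀ i, δ ≤ i → G i = G (i - δ) * ∏ k ∈ Finset.range δ, r (i - δ + k) := by
    intro i hi
    have key : ∀ m : ℕ, G (i - δ + m) = G (i - δ) * ∏ k ∈ Finset.range m, r (i - δ + k) := by
      intro m
      induction m with
      | zero => simp
      | succ m ih =>
        rw [Finset.prod_range_succ, ← mul_assoc, ← ih, hr]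
        rw [show i - δ + (m+1) = (i - δ + m) + 1 by omega]
        field_simp [ne_of_gt (hpos (i - δ + m))]
    have h2 := key δ
    rwa [Nat.sub_add_cancel hi] at h2
  -- recurrence in ratio form
  have hratio : ∀ i, δ ≤ i → 1 - r i = c * G (i - δ) / G i := by
    intro i hi
    have h := hrec i hi
    rw [hr]
    field_simp [ne_of_gt (hpos i)]
    linarith
  -- sequence u
  set u : ℕ → ℝ := fun n => Nat.rec (1:ℝ) (fun _ un => 1 - c / un^δ) n with hu
  have hu0 : u 0 = 1 := rfl
  have hus : ∀ n, u (n+1) = 1 - c / (u n)^δ := fun n => rfl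
  clear_value u
  -- main induction
  have main : ∀ n : ℕ, 0 < u n ∧ ∀ i, δ * (n+1) ≤ i → r i ≤ u n := by
    intro n
    induction n with
    | zero =>
      refine ⟨by rw [hu0]; exact one_pos, fun i hi => ?_⟩
      have hδi : δ ≤ i := le_trans (by omega) hi
      rw [hu0]
      exact le_of_lt (hrlt i hδi)
    | succ n ih =>
      obtain ⟨hun, hbd⟩ := ih
      have step : ∀ i, δ * (n+2) ≤ i → r i ≤ u (n+1) := by
        intro i hi
        have hiδ : δ ≤ i := le_trans (Nat.le_mul_of_pos_right δ (by omega)) hi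
        have hsub : δ * (n+1) ≤ i - δ := by
          apply Nat.le_sub_of_add_le
          calc δ * (n+1) + δ = δ * (n+2) := by ring
            _ ≤ i := hi
        have hwin : ∀ k ∈ Finset.range δ, r (i - δ + k) ≤ u n := by
          intro k _
          exact hbd _ (le_trans hsub (Nat.le_add_right _ k))
        have hwinpos : ∀ k ∈ Finset.range δ, 0 < r (i - δ + k) :=
          fun k _ => hrpos _
        have hprodle : ∏ k ∈ Finset.range δ, r (i - δ + k) ≤ (u n)^δ := by
          calc ∏ k ∈ Finset.range δ, r (i - δ + k)
              ≤ ∏ k ∈ Finset.range δ, u n :=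
                Finset.prod_le_prod (fun k hk => le_of_lt (hwinpos k hk)) hwin
            _ = (u n)^δ := by rw [Finset.prod_const, Finset.card_range]
        have hprodpos : 0 < ∏ k ∈ Finset.range δ, r (i - δ + k) :=
          Finset.prod_pos hwinpos
        have h1 : 1 - r i = c / ∏ k ∈ Finset.range δ, r (i - δ + k) := by
          rw [hratio i hiδ, hprod i hiδ]
          rw [div_eq_div_iff (ne_of_gt (mul_pos (hpos _) hprodpos)) (ne_of_gt hprodpos)]
          ring
        have h2 : c / (u n)^δ ≤ 1 - r i := by
          rw [h1]
          exact div_le_div_of_nonneg_left (le_of_lt hc) hprodpos hprodle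
        rw [hus]
        linarith
      refine ⟨?_, step⟩
      exact lt_of_lt_of_le (hrpos _) (step (δ * (n+2)) le_rfl)
  -- u n ≤ 1 - n ε
  have hub : ∀ n, u n ≤ 1 - n * ε := by
    intro n
    induction n with
    | zero => rw [hu0]; simp
    | succ n ih =>
      have hun := (main n).1
      have hnn : (0:ℝ) ≤ n * ε := by positivity
      have hun1 : u n ≤ 1 := by linarith
      have hpow : (u n)^δ ≤ 1 := pow_le_one₀ (le_of_lt hun) hun1
      have hpowpos : (0:ℝ) < (u n)^δ := pow_pos hun δ
      have hbound := amgm_bound δ hδ (u n) (le_of_lt hun) hun1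
      have hfu : (u n)^δ * (1 - u n) ≤ c - ε := by
        have h3 : (u n)^δ * (1 - u n) ≤ M / δ := by
          rw [le_div_iff₀ hδR]; nlinarith
        have : M / δ = c - ε := by rw [hε]; ring
        linarith
      have hstep : u (n+1) ≤ u n - ε := by
        rw [hus]
        have : 1 - u n + ε ≤ c / (u n)^δ := by
          rw [le_div_iff₀ hpowpos]
          nlinarith
        linarith
      push_cast
      linarith
  obtain ⟨n, hn⟩ := exists_nat_gt (1/ε)
  have h1 : 1 < n * ε := by
    rw [div_lt_iff₀ hεpos] at hn; linarith
  have h2 := (main n).1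
  have h3 := hub n
  linarith



-- from sum equation to recurrence
lemma rec_of_sum (c : ℝ) (hc : 0 < c) (δ : ℕ) (G : ℕ → ℝ)
    (hpos : ∀ i, 0 < G i)
    (heq : ∀ i, δ ≤ i → G i = c * ∑' j : ℕ, G (i - δ + j)) :
    ∀ i, δ ≤ i → (G (i+1) - G i) + c * G (i - δ) = 0 := by
  have hsummable : ∀ i, δ ≤ i → Summable (fun j : ℕ => G (i - δ + j)) := by
    intro i hi
    by_contra hns
    have := tsum_eq_zero_of_not_summable hns
    have h := heq i hi
    rw [this, mul_zero] at h
    exact absurd h (ne_of_gt (hpos i))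
  intro i hi
  have h1 := heq i hi
  have h2 := heq (i+1) (le_trans hi (Nat.le_succ i))
  have hsm := hsummable i hi
  have hshift : (i+1) - δ = (i - δ) + 1 := by omega
  have h4 : (∑' j : ℕ, G ((i+1) - δ + j)) = ∑' j : ℕ, G ((i - δ) + (j+1)) :=
    tsum_congr fun j => by congr 1; omega
  have h3 : (∑' j : ℕ, G (i - δ + j)) = G (i - δ) + ∑' j : ℕ, G ((i+1) - δ + j) := by
    rw [h4]
    exact Summable.tsum_eq_zero_add hsm
  rw [h1, h2, h3]
  ring

-- from recurrence + positivity + tendsto 0 to sum equation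
lemma sum_of_rec (c : ℝ) (hc : 0 < c) (δ : ℕ) (G : ℕ → ℝ)
    (hpos : ∀ i, 0 < G i)
    (hrec : ∀ i, δ ≤ i → (G (i+1) - G i) + c * G (i - δ) = 0)
    (htend : Tendsto G atTop (nhds 0)) :
    ∀ i, δ ≤ i → G i = c * ∑' j : ℕ, G (i - δ + j) := by
  intro i hi
  have hpartial : ∀ n : ℕ, c * ∑ j ∈ Finset.range n, G (i - δ + j) = G i - G (i + n) := by
    intro n
    induction n with
    | zero => simp
    | succ n ih =>
      rw [Finset.sum_range_succ, mul_add, ih]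
      have h := hrec (i + n) (le_trans hi (Nat.le_add_right i n))
      have : i - δ + n = (i + n) - δ := by omega
      rw [this]
      have : i + (n+1) = (i + n) + 1 := by omega
      rw [this]
      linarith
  have htend2 : Tendsto (fun n : ℕ => ∑ j ∈ Finset.range n, G (i - δ + j)) atTop
      (nhds (G i / c)) := by
    have h1 : Tendsto (fun n : ℕ => G (i + n)) atTop (nhds 0) := by
      have := htend.comp (tendsto_add_atTop_nat i)
      simpa [Function.comp_def, Nat.add_comm] using this
    have h2 : Tendsto (fun n : ℕ => (G i - G (i + n)) / c) atTop (nhds ((G i - 0)/c)) :=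
      (tendsto_const_nhds.sub h1).div_const c
    simp only [sub_zero] at h2
    convert h2 using 2 with n
    rw [← hpartial n]
    field_simp
  have hhs : HasSum (fun j : ℕ => G (i - δ + j)) (G i / c) :=
    (hasSum_iff_tendsto_nat_of_nonneg (fun j => le_of_lt (hpos _)) _).2 htend2
  rw [hhs.tsum_eq]
  field_simp







-- intervals without naturals are null
lemma null_of_no_nat (μ : Measure ℝ) (hsupp : suppF μ = Set.range (fun n : ℕ => (n : ℝ)))
    (a b : ℝ) (hab : ∀ m : ℕ, (m:ℝ) ∉ Set.Ioo a b) :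
    μ (Set.Ioo a b) = 0 := by
  apply measure_null_of_locally_null
  intro x hx
  have hxn : x ∉ suppF μ := by
    rw [hsupp]
    rintro ⟨m, rfl⟩
    exact hab m hx
  rw [suppF, Set.mem_setOf_eq] at hxn
  push_neg at hxn
  obtain ⟨ε, hε, hμ⟩ := hxn
  refine ⟨Set.Ioo (x - ε) (x + ε), ?_, le_antisymm hμ (zero_le)⟩
  exact mem_nhdsWithin_of_mem_nhds (Ioo_mem_nhds (by linarith) (by linarith))

-- each natural is an atom
lemma atom_pos (μ : Measure ℝ) (hsupp : suppF μ = Set.range (fun n : ℕ => (n : ℝ)))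
    (n : ℕ) : 0 < μ {(n:ℝ)} := by
  have h1 : 0 < μ (Set.Ioo ((n:ℝ) - 1) ((n:ℝ) + 1)) := by
    have : (n:ℝ) ∈ suppF μ := by rw [hsupp]; exact ⟨n, rfl⟩
    exact this 1 one_pos
  have h2 : μ (Set.Ioo ((n:ℝ) - 1) (n:ℝ)) = 0 := by
    apply null_of_no_nat μ hsupp
    intro m hm
    simp only [Set.mem_Ioo] at hm
    have h3 : m < n := by exact_mod_cast hm.2
    have h4 : (m:ℝ) + 1 ≤ n := by exact_mod_cast Nat.succ_le_of_lt h3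
    linarith [hm.1]
  have h3 : μ (Set.Ioo (n:ℝ) ((n:ℝ) + 1)) = 0 := by
    apply null_of_no_nat μ hsupp
    intro m hm
    simp only [Set.mem_Ioo] at hm
    have h4 : n < m := by exact_mod_cast hm.1
    have : (n:ℝ) + 1 ≤ m := by exact_mod_cast Nat.succ_le_of_lt h4
    linarith [hm.2]
  have hsub : Set.Ioo ((n:ℝ) - 1) ((n:ℝ) + 1) ⊆
      Set.Ioo ((n:ℝ) - 1) (n:ℝ) ∪ {(n:ℝ)} ∪ Set.Ioo (n:ℝ) ((n:ℝ) + 1) := by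
    intro x hx
    simp only [Set.mem_Ioo] at hx
    rcases lt_trichotomy x (n:ℝ) with h | h | h
    · exact Or.inl (Or.inl ⟨hx.1, h⟩)
    · exact Or.inl (Or.inr (by simp [h]))
    · exact Or.inr ⟨h, hx.2⟩
  by_contra hcon
  push_neg at hcon
  have hz : μ {(n:ℝ)} = 0 := le_antisymm hcon (zero_le)
  have hle := le_trans (measure_mono (μ := μ) hsub) (le_trans (measure_union_le _ _)
    (add_le_add_left (measure_union_le _ _) _))
  rw [h2, h3, hz] at hle
  simp at hle
  exact absurd hle (ne_of_gt h1)

-- positivity of survival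
lemma surv_pos (μ : Measure ℝ) [IsFiniteMeasure μ]
    (hsupp : suppF μ = Set.range (fun n : ℕ => (n : ℝ))) (i : ℕ) : 0 < survGn μ i := by
  have h1 : μ {((i+1 : ℕ):ℝ)} ≤ μ (Set.Ioi (i:ℝ)) := by
    apply measure_mono
    intro x hx
    simp only [Set.mem_singleton_iff] at hx
    subst hx
    simp only [Set.mem_Ioi]
    push_cast
    linarith
  have h2 := lt_of_lt_of_le (atom_pos μ hsupp (i+1)) h1
  unfold survGn
  exact ENNReal.toReal_pos (ne_of_gt h2) (measure_ne_top μ _)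

-- strict decrease
lemma surv_strict (μ : Measure ℝ) [IsFiniteMeasure μ]
    (hsupp : suppF μ = Set.range (fun n : ℕ => (n : ℝ)))
    (i j : ℕ) (hij : i < j) : survGn μ j < survGn μ i := by
  have hsub : Set.Ici (j:ℝ) ⊆ Set.Ioi (i:ℝ) := by
    intro x hx
    simp only [Set.mem_Ici] at hx
    simp only [Set.mem_Ioi]
    have : (i:ℝ) < j := by exact_mod_cast hij
    linarith
  have hd : μ (Set.Ici (j:ℝ)) = μ (Set.Ioi (j:ℝ)) + μ {(j:ℝ)} := by
    rw [← Set.Ioi_union_left, measure_union (by simp [Set.disjoint_left]; exact fun a ha => ne_of_gt ha) (measurableSet_singleton _)]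
  have hle : μ (Set.Ioi (j:ℝ)) + μ {(j:ℝ)} ≤ μ (Set.Ioi (i:ℝ)) := by
    rw [← hd]; exact measure_mono hsub
  have hfin : ∀ s : Set ℝ, μ s ≠ ⊤ := fun s => measure_ne_top μ s
  unfold survGn
  have h5 := ENNReal.toReal_mono (hfin _) hle
  rw [ENNReal.toReal_add (hfin _) (hfin _)] at h5
  have h6 : 0 < (μ {(j:ℝ)}).toReal :=
    ENNReal.toReal_pos (ne_of_gt (atom_pos μ hsupp j)) (hfin _)
  linarith

-- survival < 1
lemma surv_lt_one (μ : Measure ℝ) (hprob : IsProbabilityMeasure μ)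
    (hsupp : suppF μ = Set.range (fun n : ℕ => (n : ℝ))) (i : ℕ) : survGn μ i < 1 := by
  have h0 : survGn μ i ≤ survGn μ 0 := by
    unfold survGn
    apply ENNReal.toReal_mono (measure_ne_top μ _)
    apply measure_mono
    apply Set.Ioi_subset_Ioi
    exact_mod_cast Nat.zero_le i
  have h1 : μ (Set.Ioi ((0:ℕ):ℝ)) + μ {((0:ℕ):ℝ)} ≤ 1 := by
    rw [← measure_union (by simp [Set.disjoint_left]; exact fun a ha => ne_of_gt ha) (measurableSet_singleton _)]
    rw [Set.Ioi_union_left]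
    exact prob_le_one
  have hfin : ∀ s : Set ℝ, μ s ≠ ⊤ := fun s => measure_ne_top μ s
  have h2 := ENNReal.toReal_mono (by norm_num) h1
  rw [ENNReal.toReal_add (hfin _) (hfin _), ENNReal.toReal_one] at h2
  have h3 : 0 < (μ {((0:ℕ):ℝ)}).toReal :=
    ENNReal.toReal_pos (ne_of_gt (atom_pos μ hsupp 0)) (hfin _)
  have : survGn μ 0 < 1 := by unfold survGn; linarith
  linarith

-- tendsto 0
lemma surv_tendsto (μ : Measure ℝ) [IsFiniteMeasure μ] :
    Tendsto (survGn μ) atTop (nhds 0) := by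
  have hset : (⋂ n : ℕ, Set.Ioi ((n:ℕ):ℝ)) = ∅ := by
    ext x
    simp only [Set.mem_iInter, Set.mem_Ioi, Set.mem_empty_iff_false, iff_false, not_forall,
      not_lt]
    obtain ⟨n, hn⟩ := exists_nat_gt x
    exact ⟨n, le_of_lt hn⟩
  have h1 : Tendsto (fun n : ℕ => μ (Set.Ioi ((n:ℕ):ℝ))) atTop (nhds (μ (⋂ n : ℕ, Set.Ioi ((n:ℕ):ℝ)))) := by
    apply tendsto_measure_iInter_atTop
    · exact fun n => (measurableSet_Ioi).nullMeasurableSet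
    · intro m n hmn
      apply Set.Ioi_subset_Ioi
      exact_mod_cast hmn
    · exact ⟨0, measure_ne_top μ _⟩
  rw [hset, measure_empty] at h1
  have h2 := (ENNReal.tendsto_toReal (by simp : (0:ℝ≥0∞) ≠ ⊤)).comp h1
  exact h2

lemma construct_mu (c : ℝ) (hc : 0 < c) (δ : ℕ) (hδ : 0 < δ)
    (hcond : c * δ ≤ ((δ:ℝ)/(δ+1))^(δ+1)) :
    ∃ μ : Measure ℝ, IsProbabilityMeasure μ ∧ Integrable (fun x : ℝ => x) μ ∧
      suppF μ = Set.range (fun n : ℕ => (n : ℝ)) ∧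
      ∀ i : ℕ, δ ≤ i → survGn μ i = c * ∑' j : ℕ, survGn μ (i - δ + j) := by
  have hδR : (0:ℝ) < δ := by exact_mod_cast hδ
  -- find the root L
  obtain ⟨L, hLmem, hLroot⟩ : ∃ L ∈ Set.Icc (0:ℝ) ((δ:ℝ)/(δ+1)), L^δ * (1-L) = c := by
    have hb : (0:ℝ) ≤ (δ:ℝ)/(δ+1) := by positivity
    have hcont : ContinuousOn (fun x : ℝ => x^δ * (1-x)) (Set.Icc 0 ((δ:ℝ)/(δ+1))) :=
      (continuous_pow δ).continuousOn.mul (continuous_const.sub continuous_id).continuousOn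
    have hftop : ((δ:ℝ)/(δ+1))^δ * (1 - (δ:ℝ)/(δ+1)) = ((δ:ℝ)/(δ+1))^(δ+1) / δ := by
      rw [pow_succ]
      field_simp
      ring
    apply intermediate_value_Icc hb hcont
    constructor
    · simp only [zero_pow (Nat.pos_iff_ne_zero.1 hδ), zero_mul]
      exact le_of_lt hc
    · rw [hftop, le_div_iff₀ hδR]
      linarith
  have hL0 : 0 < L := by
    rcases eq_or_lt_of_le hLmem.1 with h | h
    · exfalso
      rw [← h, zero_pow (Nat.pos_iff_ne_zero.1 hδ), zero_mul] at hLroot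
      exact absurd hLroot.symm (ne_of_gt hc)
    · exact h
  have hL1 : L < 1 := by
    have h1 : (δ:ℝ)/(δ+1) < 1 := by rw [div_lt_one (by linarith)]; linarith
    exact lt_of_le_of_lt hLmem.2 h1
  have h1L : (0:ℝ) ≤ 1 - L := by linarith
  have hne : (1:ℝ) - L ≠ 0 := by linarith
  have hLn : ∀ k : ℕ, (0:ℝ) ≤ L^k := fun k => pow_nonneg hL0.le k
  -- weights
  obtain ⟨w, hw0, hws⟩ : ∃ w : ℕ → ℝ≥0∞, w 0 = ENNReal.ofReal (1/2) ∧
      ∀ m : ℕ, w (m+1) = ENNReal.ofReal ((1/2)*(1-L)*L^m) :=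
    ⟨fun n => Nat.casesOn n (ENNReal.ofReal (1/2))
      (fun m => ENNReal.ofReal ((1/2)*(1-L)*L^m)), rfl, fun _ => rfl⟩
  have hwpos : ∀ n, 0 < w n := by
    intro n
    cases n with
    | zero => rw [hw0]; apply ENNReal.ofReal_pos.2; norm_num
    | succ m =>
      rw [hws]
      apply ENNReal.ofReal_pos.2
      have := pow_pos hL0 m
      nlinarith
  obtain ⟨μ, hμ⟩ : ∃ μ : Measure ℝ,
      μ = Measure.sum (fun n : ℕ => w n • Measure.dirac ((n:ℕ):ℝ)) := ⟨_, rfl⟩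
  -- value on measurable sets
  have happ : ∀ s : Set ℝ, MeasurableSet s →
      μ s = ∑' n : ℕ, w n * s.indicator (fun _ => (1:ℝ≥0∞)) ((n:ℕ):ℝ) := by
    intro s hs
    rw [hμ, Measure.sum_apply _ hs]
    refine tsum_congr fun n => ?_
    rw [Measure.smul_apply, Measure.dirac_apply' _ hs, smul_eq_mul]
    rfl
  -- geometric tsum helper (real)
  have hsumgeo : Summable (fun m : ℕ => L^m) :=
    summable_geometric_of_lt_one (le_of_lt hL0) hL1
  have hgsum : ∀ a : ℝ, Summable (fun m : ℕ => a * L^m) ∧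
      (∑' m : ℕ, a * L^m) = a / (1-L) := by
    intro a
    refine ⟨hsumgeo.mul_left a, ?_⟩
    rw [tsum_mul_left, tsum_geometric_of_lt_one (le_of_lt hL0) hL1, div_eq_mul_inv]
  -- survival function values
  have hIoi : ∀ i : ℕ, μ (Set.Ioi ((i:ℕ):ℝ)) = ENNReal.ofReal ((1/2) * L^i) := by
    intro i
    rw [happ _ measurableSet_Ioi]
    rw [← Summable.sum_add_tsum_nat_add' (f := fun n : ℕ =>
        w n * (Set.Ioi ((i:ℕ):ℝ)).indicator (fun _ => (1:ℝ≥0∞)) ((n:ℕ):ℝ)) (k := i+1)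
        ENNReal.summable]
    have hz : ∑ n ∈ Finset.range (i+1),
        w n * (Set.Ioi ((i:ℕ):ℝ)).indicator (fun _ => (1:ℝ≥0∞)) ((n:ℕ):ℝ) = 0 := by
      apply Finset.sum_eq_zero
      intro n hn
      have hn' : n ≤ i := by simp only [Finset.mem_range] at hn; omega
      have hnot : ((n:ℕ):ℝ) ∉ Set.Ioi ((i:ℕ):ℝ) := by
        simp only [Set.mem_Ioi, not_lt]
        exact_mod_cast hn'
      rw [Set.indicator_of_notMem hnot, mul_zero]
    rw [hz, zero_add]
    have hterm : ∀ n : ℕ, w (n + (i+1)) *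
        (Set.Ioi ((i:ℕ):ℝ)).indicator (fun _ => (1:ℝ≥0∞)) (((n + (i+1):ℕ)):ℝ)
        = ENNReal.ofReal ((1/2)*(1-L)*L^i * L^n) := by
      intro n
      have hmem : (((n + (i+1):ℕ)):ℝ) ∈ Set.Ioi ((i:ℕ):ℝ) := by
        simp only [Set.mem_Ioi]
        exact_mod_cast (by omega : i < n + (i+1))
      rw [Set.indicator_of_mem hmem, mul_one]
      have he : n + (i+1) = (n + i) + 1 := by omega
      rw [he, hws]
      congr 1
      rw [pow_add]
      ring
    rw [tsum_congr hterm, ← ENNReal.ofReal_tsum_of_nonneg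
      (fun n => mul_nonneg (mul_nonneg (mul_nonneg (by norm_num) h1L) (hLn i)) (hLn n))
      (hgsum ((1/2)*(1-L)*L^i)).1]
    congr 1
    rw [(hgsum ((1/2)*(1-L)*L^i)).2]
    field_simp
  have hsurv : ∀ i : ℕ, survGn μ i = (1/2) * L^i := by
    intro i
    rw [survGn, hIoi, ENNReal.toReal_ofReal (by positivity)]
  -- probability measure
  have hprob : IsProbabilityMeasure μ := by
    constructor
    rw [happ _ MeasurableSet.univ]
    simp only [Set.indicator_univ, mul_one]
    rw [tsum_eq_zero_add' ENNReal.summable, hw0, tsum_congr hws,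
      ← ENNReal.ofReal_tsum_of_nonneg (fun n => mul_nonneg (mul_nonneg (by norm_num) h1L) (hLn n))
      (hgsum ((1/2)*(1-L))).1,
      (hgsum ((1/2)*(1-L))).2,
      ← ENNReal.ofReal_add (by norm_num) (div_nonneg (mul_nonneg (by norm_num) h1L) h1L)]
    rw [show (1:ℝ)/2 + (1/2)*(1-L)/(1-L) = 1 by field_simp; ring]
    exact ENNReal.ofReal_one
  refine ⟨μ, hprob, ?_, ?_, ?_⟩
  -- integrability
  · constructor
    · exact measurable_id.aestronglyMeasurable
    · rw [hasFiniteIntegral_def, hμ, lintegral_sum_measure]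
      have hterm : ∀ n : ℕ, ∫⁻ a, ‖a‖ₑ ∂(w n • Measure.dirac ((n:ℕ):ℝ)) = w n * n := by
        intro n
        rw [lintegral_smul_measure, lintegral_dirac]
        congr 1
        simp
      rw [tsum_congr hterm, tsum_eq_zero_add' ENNReal.summable]
      have h0 : w 0 * ((0:ℕ):ℝ≥0∞) = 0 := by simp
      rw [h0, zero_add]
      have hterm2 : ∀ n : ℕ, w (n+1) * ((n+1:ℕ):ℝ≥0∞)
          = ENNReal.ofReal ((1/2)*(1-L) * ((n+1) * L^n)) := by
        intro n
        rw [hws, ← ENNReal.ofReal_natCast (n+1),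
          ← ENNReal.ofReal_mul (mul_nonneg (mul_nonneg (by norm_num) h1L) (hLn n))]
        congr 1
        push_cast
        ring
      rw [tsum_congr hterm2]
      have hsum2 : Summable (fun n : ℕ => (1/2)*(1-L) * (((n:ℝ)+1) * L^n)) := by
        apply Summable.mul_left
        have h1 : Summable (fun n : ℕ => (n:ℝ) * L^n) := by
          have := summable_pow_mul_geometric_of_norm_lt_one 1
            (by rw [Real.norm_eq_abs, abs_of_pos hL0]; exact hL1)
          exact this.congr fun n => by ring
        exact (h1.add hsumgeo).congr fun n => by push_cast; ring
      rw [← ENNReal.ofReal_tsum_of_nonneg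
        (fun n => mul_nonneg (mul_nonneg (by norm_num) h1L)
          (mul_nonneg (by positivity) (hLn n)))
        (hsum2.congr fun n => by push_cast; ring)]
      exact ENNReal.ofReal_lt_top
  -- support
  · ext x
    simp only [Set.mem_range]
    constructor
    · intro hx
      by_contra hnot
      push_neg at hnot
      have hkey : ∃ ε > (0:ℝ), ∀ n : ℕ, ((n:ℕ):ℝ) ∉ Set.Ioo (x - ε) (x + ε) := by
        rcases lt_or_ge x 0 with hx0 | hx0
        · refine ⟨-x, by linarith, fun n => ?_⟩
          simp only [Set.mem_Ioo, not_and, not_lt]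
          intro _
          have : (0:ℝ) ≤ n := Nat.cast_nonneg n
          linarith
        · set m := ⌊x⌋₊ with hm
          have h1 : (m:ℝ) ≤ x := Nat.floor_le hx0
          have h2 : x < (m:ℝ) + 1 := Nat.lt_floor_add_one x
          have h3 : (m:ℝ) ≠ x := fun h => hnot m h
          have h4 : (m:ℝ) < x := lt_of_le_of_ne h1 h3
          refine ⟨min (x - m) ((m:ℝ) + 1 - x), by simp; constructor <;> linarith, fun n => ?_⟩
          simp only [Set.mem_Ioo, not_and, not_lt]
          intro hlow
          by_contra hup
          push_neg at hup
          have hlow2 : (m:ℝ) < n := by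
            have := min_le_left (x - (m:ℝ)) ((m:ℝ) + 1 - x)
            linarith
          have hup2 : (n:ℝ) < (m:ℝ) + 1 := by
            have := min_le_right (x - (m:ℝ)) ((m:ℝ) + 1 - x)
            linarith
          have hl : m < n := by exact_mod_cast hlow2
          have hu : n < m + 1 := by exact_mod_cast hup2
          omega
      obtain ⟨ε, hε, hto⟩ := hkey
      have hzero : μ (Set.Ioo (x - ε) (x + ε)) = 0 := by
        rw [happ _ measurableSet_Ioo]
        apply (ENNReal.tsum_eq_zero).2
        intro n
        rw [Set.indicator_of_notMem (hto n), mul_zero]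
      have := hx ε hε
      rw [hzero] at this
      exact absurd this (lt_irrefl 0)
    · rintro ⟨n, rfl⟩
      intro ε hε
      have hle : w n • Measure.dirac ((n:ℕ):ℝ) ≤ μ := hμ ▸ Measure.le_sum _ n
      have h1 : (w n • Measure.dirac ((n:ℕ):ℝ)) (Set.Ioo ((n:ℝ) - ε) ((n:ℝ) + ε)) = w n := by
        rw [Measure.smul_apply, Measure.dirac_apply' _ measurableSet_Ioo, smul_eq_mul,
          Set.indicator_of_mem (by simp only [Set.mem_Ioo]; constructor <;> linarith)]
        simp
      calc (0:ℝ≥0∞) < w n := hwpos n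
        _ = _ := h1.symm
        _ ≤ _ := hle _
  -- the equation
  · intro i hi
    rw [hsurv i]
    have ht : ∀ j : ℕ, survGn μ (i - δ + j) = ((1/2) * L^(i-δ)) * L^j := by
      intro j
      rw [hsurv, pow_add]
      ring
    rw [tsum_congr ht, (hgsum ((1/2) * L^(i-δ))).2, ← hLroot]
    have hpow : L^δ * L^(i-δ) = L^i := by
      rw [← pow_add]
      congr 1
      omega
    have hfin : L ^ δ * (1 - L) * (1 / 2 * L ^ (i - δ) / (1 - L)) = 1/2 * (L^δ * L^(i-δ)) := by
      field_simp
    rw [hfin, hpow]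

/-- A cdf `F` with support `ℤ₊` solves `P_{c,δ}` iff `y = 1 - F` restricted to `ℤ₊` is a
positive solution of the discrete IVP whose initial function belongs to `Φ_d`; in
particular such `F` exists iff `cδ ≤ (δ/(δ+1))^{δ+1}`. -/
theorem stmt17 (c : ℝ) (hc : 0 < c) (δ : ℕ) (hδ : 0 < δ) :
    (∀ μ : Measure ℝ, IsProbabilityMeasure μ → Integrable (fun x : ℝ => x) μ →
      suppF μ = Set.range (fun n : ℕ => (n : ℝ)) →
      ((∀ i : ℕ, δ ≤ i → survGn μ i = c * ∑' j : ℕ, survGn μ (i - δ + j)) ↔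
        (IsDSol c δ (survGn μ) (survGn μ) ∧ MemPhid δ (survGn μ) ∧
          ∀ i : ℕ, 0 < survGn μ i))) ∧
    ((∃ μ : Measure ℝ, IsProbabilityMeasure μ ∧ Integrable (fun x : ℝ => x) μ ∧
        suppF μ = Set.range (fun n : ℕ => (n : ℝ)) ∧
        ∀ i : ℕ, δ ≤ i → survGn μ i = c * ∑' j : ℕ, survGn μ (i - δ + j)) ↔
      c * δ ≤ ((δ : ℝ) / (δ + 1)) ^ (δ + 1)) := by
  constructor
  · intro μ hprob hint hsupp
    haveI := hprob
    constructor
    · intro heq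
      have hpos : ∀ i : ℕ, 0 < survGn μ i := surv_pos μ hsupp
      refine ⟨⟨fun i _ => rfl, rec_of_sum c hc δ (survGn μ) hpos heq⟩,
        ⟨fun i _ => ⟨hpos i, surv_lt_one μ hprob hsupp i⟩,
         fun i j hij _ => surv_strict μ hsupp i j hij⟩, hpos⟩
    · rintro ⟨⟨_, hrec⟩, _, hpos⟩
      exact sum_of_rec c hc δ (survGn μ) hpos hrec (surv_tendsto μ)
  · constructor
    · rintro ⟨μ, hprob, hint, hsupp, heq⟩
      haveI := hprob
      exact key_osc c hc δ hδ (survGn μ) (surv_pos μ hsupp)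
        (rec_of_sum c hc δ _ (surv_pos μ hsupp) heq)
    · exact construct_mu c hc δ hδ
end

section
/- Fix c > 0 and a positive integer δ with cδ ≤ (δ/(δ+1))^{δ+1}. If y is a positive solution of the discrete initial value problem Δy(i) + c·y(i−δ) = 0 for i ≥ δ, y = φ on {0,…,δ}, with initial function φ ∈ Φ_d, then φ(δ) > (cδ/(1 − cδ))·(S₁ − cδ·S₂), where S₁ = (1/δ)Σ_{j=0}^{δ−1} φ(j) and S₂ = (1/δ²)Σ_{j=δ}^{2δ−1} Σ_{i=0}^{j−δ−1} φ(i). -/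
open MeasureTheory Set

/-- Necessary condition in the discrete case: if `y` is a positive solution of the discrete
IVP with initial function `φ ∈ Φ_d`, then `φ(δ) > (cδ/(1 - cδ))(S₁ - cδ S₂)`. -/
theorem stmt18 (c : ℝ) (hc : 0 < c) (δ : ℕ) (hδ : 0 < δ)
    (hcδ : c * δ ≤ ((δ : ℝ) / (δ + 1)) ^ (δ + 1))
    (φ y : ℕ → ℝ) (hφ : MemPhid δ φ) (hy : IsDSol c δ φ y)
    (hpos : ∀ i : ℕ, 0 < y i)
    (S₁ S₂ : ℝ)
    (hS₁ : S₁ = (1 / (δ : ℝ)) * ∑ j ∈ Finset.range δ, φ j)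
    (hS₂ : S₂ = (1 / (δ : ℝ) ^ 2) * ∑ j ∈ Finset.Ico δ (2 * δ), ∑ i ∈ Finset.range (j - δ), φ i) :
    (c * δ / (1 - c * δ)) * (S₁ - c * δ * S₂) < φ δ := by
  have hd : (0:ℝ) < δ := by exact_mod_cast hδ
  have h1 : c * δ < 1 := by
    have hb : ((δ:ℝ)/(δ+1)) ^ (δ+1) < 1 := by
      apply pow_lt_one₀ (by positivity) _ (Nat.succ_ne_zero δ)
      rw [div_lt_one (by positivity)]; linarith
    linarith
  obtain ⟨hinit, hrec⟩ := hy
  -- Formula for y on [δ, 2δ]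
  have hA : ∀ i ≤ δ, y (δ + i) = φ δ - c * ∑ k ∈ Finset.range i, φ k := by
    intro i hi
    induction i with
    | zero => simp [hinit δ le_rfl]
    | succ n ih =>
      have hn : n ≤ δ := Nat.le_of_succ_le hi
      have hr := hrec (δ + n) (Nat.le_add_right δ n)
      rw [show δ + n - δ = n by omega, hinit n hn] at hr
      rw [show δ + (n+1) = δ + n + 1 by omega, Finset.sum_range_succ]
      have := ih hn
      linarith
  -- Summed formula for y on [2δ, 3δ]
  have hB : ∀ i ≤ δ, y (2*δ + i) = y (2*δ) - c * ∑ m ∈ Finset.Ico δ (δ + i), y m := by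
    intro i hi
    induction i with
    | zero => simp
    | succ n ih =>
      have hn : n ≤ δ := Nat.le_of_succ_le hi
      have hr := hrec (2*δ + n) (by omega)
      rw [show 2*δ + n - δ = δ + n by omega] at hr
      rw [show 2*δ + (n+1) = 2*δ + n + 1 by omega, show δ + (n+1) = δ + n + 1 by omega,
        Finset.sum_Ico_succ_top (by omega : δ ≤ δ + n)]
      have := ih hn
      linarith
  set T₁ : ℝ := ∑ j ∈ Finset.range δ, φ j with hT₁
  set T₂ : ℝ := ∑ j ∈ Finset.Ico δ (2*δ), ∑ i ∈ Finset.range (j - δ), φ i with hT₂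
  have hy2d : y (2*δ) = φ δ - c * T₁ := by
    have := hA δ le_rfl
    rwa [show δ + δ = 2*δ by omega] at this
  have hsum : ∑ m ∈ Finset.Ico δ (2*δ), y m = (δ:ℝ) * φ δ - c * T₂ := by
    have hcong : ∀ m ∈ Finset.Ico δ (2*δ),
        y m = φ δ - c * ∑ k ∈ Finset.range (m - δ), φ k := by
      intro m hm
      simp only [Finset.mem_Ico] at hm
      have := hA (m - δ) (by omega)
      rwa [show δ + (m - δ) = m by omega] at this
    rw [Finset.sum_congr rfl hcong, Finset.sum_sub_distrib, Finset.sum_const,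
      Nat.card_Ico, show 2*δ - δ = δ by omega, nsmul_eq_mul, ← Finset.mul_sum, hT₂]
  have hy3d : y (3*δ) = y (2*δ) - c * ∑ m ∈ Finset.Ico δ (2*δ), y m := by
    have := hB δ le_rfl
    rwa [show 2*δ + δ = 3*δ by ring, show δ + δ = 2*δ by ring] at this
  have key : (0:ℝ) < φ δ - c * T₁ - c * ((δ:ℝ) * φ δ - c * T₂) := by
    have := hpos (3*δ)
    rw [hy3d, hy2d, hsum] at this
    linarith
  have hδne : (δ:ℝ) ≠ 0 := ne_of_gt hd
  rw [hS₁, hS₂, div_mul_eq_mul_div, div_lt_iff₀ (by linarith : (0:ℝ) < 1 - c*δ)]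
  have heq : c * ↑δ * (1 / (δ:ℝ) * T₁ - c * ↑δ * (1 / (δ:ℝ)^2 * T₂))
      = c * T₁ - c^2 * T₂ := by
    field_simp
  rw [heq]
  nlinarith [key]
end
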